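/- arXiv:2506.12146 — 2 statements merged into one kernel-verified Lean document; each statement's English description precedes it below -/
import Mathlib

section
/- The derived subgroup of the weak commutativity group χ(G) is the central product of D and L₁L₂: namely χ(G)' equals the join D ⊔ (L₁ ⊔ L₂), the commutator subgroup ⁅D, L₁ ⊔ L₂⁆ is trivial, and D ⊓ (L₁ ⊔ L₂) is contained in the centralizer of χ(G)' (every element of D ⊓ (L₁ ⊔ L₂) commutes with every element of χ(G)'). -/
open Subgroup

/-- The weak commutativity relations inside the free product `G ∗ G`. -/
def chiRel (G : Type*) [Group G] : Subgroup (Monoid.Coprod G G) :=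
  Subgroup.normalClosure
    {x | ∃ g : G, x = Monoid.Coprod.inl g * Monoid.Coprod.inr g *
      (Monoid.Coprod.inl g)⁻¹ * (Monoid.Coprod.inr g)⁻¹}

instance chiRel_normal (G : Type*) [Group G] : (chiRel G).Normal :=
  Subgroup.normalClosure_normal

/-- The weak commutativity group `χ(G)`. -/
def Chi (G : Type*) [Group G] : Type _ := Monoid.Coprod G G ⧸ chiRel G

instance (G : Type*) [Group G] : Group (Chi G) :=
  inferInstanceAs (Group (Monoid.Coprod G G ⧸ chiRel G))

/-- The canonical map `G → χ(G)`, `g ↦ g`. -/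
def chiIota1 (G : Type*) [Group G] : G →* Chi G :=
  (QuotientGroup.mk' (chiRel G)).comp Monoid.Coprod.inl

/-- The canonical map `G → χ(G)`, `g ↦ g^φ`. -/
def chiIota2 (G : Type*) [Group G] : G →* Chi G :=
  (QuotientGroup.mk' (chiRel G)).comp Monoid.Coprod.inr

/-- `G₁ ≤ χ(G)`. -/
def chiG1 (G : Type*) [Group G] : Subgroup (Chi G) := (chiIota1 G).range

/-- `G₂ = G^φ ≤ χ(G)`. -/
def chiG2 (G : Type*) [Group G] : Subgroup (Chi G) := (chiIota2 G).range

/-- `L = ⟨g⁻¹ g^φ : g ∈ G⟩`. -/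
def chiL (G : Type*) [Group G] : Subgroup (Chi G) :=
  Subgroup.closure {x | ∃ g : G, x = (chiIota1 G g)⁻¹ * chiIota2 G g}

/-- `D = ⁅G₁, G₂⁆`. -/
def chiD (G : Type*) [Group G] : Subgroup (Chi G) := ⁅chiG1 G, chiG2 G⁆

/-- `L₁ = ⁅L, G₁⁆`. -/
def chiL1 (G : Type*) [Group G] : Subgroup (Chi G) := ⁅chiL G, chiG1 G⁆

/-- `L₂ = ⁅L, G₂⁆`. -/
def chiL2 (G : Type*) [Group G] : Subgroup (Chi G) := ⁅chiL G, chiG2 G⁆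

/-- `R = ⁅⁅G₁, L⁆, G₂⁆`. -/
def chiR (G : Type*) [Group G] : Subgroup (Chi G) := ⁅⁅chiG1 G, chiL G⁆, chiG2 G⁆

/-- `L₁₂ = ⁅L₁, L₂⁆`. -/
def chiL12 (G : Type*) [Group G] : Subgroup (Chi G) := ⁅chiL1 G, chiL2 G⁆

/-!
Weak commutativity for `h`, `h⁻¹g` and `g` yields Sidki's identity `[g, h^φ] = [g^φ, h]`.
With it, conjugation by `m` and by `m^φ` act identically on each generator `[g, h^φ]` of `D`,
so `D` centralizes `L`. As `G₁` and `G₂` generate `χ(G)`, normality of `D`, `L`, `L₁`, `L₂` only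
needs conjugation by `G₁` and `G₂`; for `L₁ = [L, G₁]`, conjugating `G₁` by `G₂` introduces
factors from `D`, which are invisible in commutators with `L` (symmetrically for `L₂`).
Modulo `D L₁ L₂` the generators `g` and `h^φ` commute, and `h^φ = h · (h⁻¹h^φ)` with `h⁻¹h^φ`
central there, so the quotient is abelian. The remaining claims follow from `[D, L] = 1` and
`L₁ L₂ ≤ L`.
-/

open scoped commutatorElement

section GroupTheory

variable {H : Type*} [Group H]

theorem Subgroup.le_normalizer_commutator_of_commutator_le_centralizer {N A B : Subgroup H}
    [hN : N.Normal] (hAB : ⁅A, B⁆ ≤ centralizer N) : B ≤ normalizer (⁅N, A⁆ : Subgroup H) := by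
  rw [commutator_def, le_normalizer_closure_iff]
  rintro b hb _ ⟨n, hn, x, hx, rfl⟩
  have hc : Commute (b * n * b⁻¹) ⁅x⁻¹, b⁆ :=
    mem_centralizer_iff.mp (hAB (commutator_mem_commutator (inv_mem hx) hb)) _
      (hN.conj_mem n hn b)
  have key : b * ⁅n, x⁆ * b⁻¹ = ⁅b * n * b⁻¹, x⁆ :=
    calc b * ⁅n, x⁆ * b⁻¹ = ⁅b * n * b⁻¹, x * ⁅x⁻¹, b⁆⁆ := by
          simp only [commutatorElement_def]; group
      _ = ⁅b * n * b⁻¹, x⁆ := by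
          rw [commutatorElement_mul_right_eq_mul_conj, commutatorElement_eq_one_iff_commute.mpr hc]
          group
  rw [key]
  exact subset_closure ⟨_, hN.conj_mem n hn b, x, hx, rfl⟩

theorem Subgroup.inf_le_centralizer_sup {A B : Subgroup H} (h : A ≤ centralizer B) :
    A ⊓ B ≤ centralizer (A ⊔ B : Subgroup H) := by
  rw [le_centralizer_iff]
  exact sup_le (h.trans (centralizer_le inf_le_right))
    ((le_centralizer_iff.mp h).trans (centralizer_le inf_le_left))

theorem Subgroup.commutator_le_ker_of_commute {K : Type*} [Group K] {S : Set H}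
    (hS : closure S = ⊤) (f : H →* K) (hf : ∀ x ∈ S, ∀ y ∈ S, Commute (f x) (f y)) :
    _root_.commutator H ≤ f.ker := by
  have hcomm : ∀ x ∈ f '' S, ∀ y ∈ f '' S, x * y = y * x := by
    rintro _ ⟨x, hx, rfl⟩ _ ⟨y, hy, rfl⟩
    exact hf x hx y hy
  have := isMulCommutative_closure hcomm
  rw [_root_.commutator_def, commutator_le]
  intro x _ y _
  have hrange : ∀ z, f z ∈ closure (f '' S) := fun z => by
    rw [← MonoidHom.map_closure, hS]; exact ⟨z, mem_top z, rfl⟩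
  rw [MonoidHom.mem_ker, map_commutatorElement, commutatorElement_eq_one_iff_mul_comm]
  exact congrArg Subtype.val (mul_comm' (⟨f x, hrange x⟩ : closure (f '' S)) ⟨f y, hrange y⟩)

end GroupTheory

section Chi

variable {G : Type*} [Group G]

local notation "ι₁" => chiIota1 _
local notation "ι₂" => chiIota2 _

theorem chiIota1_commute_chiIota2 (g : G) : Commute (ι₁ g) (ι₂ g) := by
  rw [← commutatorElement_eq_one_iff_commute]
  exact (QuotientGroup.eq_one_iff _).mpr (subset_normalClosure ⟨g, rfl⟩)

theorem commutatorElement_chiIota1_chiIota2 (g h : G) : ⁅ι₁ g, ι₂ h⁆ = ⁅ι₂ g, ι₁ h⁆ := by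
  obtain ⟨k, rfl⟩ : ∃ k, g = h * k := ⟨h⁻¹ * g, by group⟩
  have hh := (chiIota1_commute_chiIota2 h).eq
  have hhk := (chiIota1_commute_chiIota2 (h * k)).eq
  simp only [map_mul] at hhk ⊢
  have hx : ι₁ k * (ι₂ k)⁻¹ * (ι₁ k)⁻¹ = (ι₂ k)⁻¹ := by
    rw [(chiIota1_commute_chiIota2 k).inv_right.eq, mul_inv_cancel_right]
  set a := ι₁ h; set b := ι₂ h; set x := ι₁ k; set y := ι₂ k
  calc ⁅a * x, b⁆ = (a * x * (b * y)) * (y⁻¹ * x⁻¹ * a⁻¹ * b⁻¹) := by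
        rw [commutatorElement_def]; group
    _ = b * y * a * (x * y⁻¹ * x⁻¹) * a⁻¹ * b⁻¹ := by rw [hhk]; group
    _ = b * y * a * y⁻¹ * (a * b)⁻¹ := by rw [hx, hh]; group
    _ = ⁅b * y, a⁆ := by rw [commutatorElement_def]; group

theorem conj_chiIota1_eq_conj_chiIota2 (m g h : G) :
    ι₁ m * ⁅ι₁ g, ι₂ h⁆ * (ι₁ m)⁻¹ = ι₂ m * ⁅ι₁ g, ι₂ h⁆ * (ι₂ m)⁻¹ := by
  calc ι₁ m * ⁅ι₁ g, ι₂ h⁆ * (ι₁ m)⁻¹ = ⁅ι₁ (m * g), ι₂ h⁆ * ⁅ι₁ m, ι₂ h⁆⁻¹ := by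
        rw [map_mul, commutatorElement_mul_left_eq_conj_mul]; group
    _ = ⁅ι₂ (m * g), ι₁ h⁆ * ⁅ι₂ m, ι₁ h⁆⁻¹ := by
        rw [commutatorElement_chiIota1_chiIota2, commutatorElement_chiIota1_chiIota2]
    _ = ι₂ m * ⁅ι₁ g, ι₂ h⁆ * (ι₂ m)⁻¹ := by
        rw [map_mul, commutatorElement_mul_left_eq_conj_mul, commutatorElement_chiIota1_chiIota2]
        group

theorem chiD_le_centralizer_chiL : chiD G ≤ centralizer (chiL G) := by
  rw [chiD, commutator_le]
  rintro _ ⟨g, rfl⟩ _ ⟨h, rfl⟩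
  rw [chiL, centralizer_closure]
  rintro _ ⟨m, rfl⟩
  have hconj := conj_chiIota1_eq_conj_chiIota2 m g h
  calc (ι₁ m)⁻¹ * ι₂ m * ⁅ι₁ g, ι₂ h⁆
      = (ι₁ m)⁻¹ * (ι₂ m * ⁅ι₁ g, ι₂ h⁆ * (ι₂ m)⁻¹) * ι₂ m := by group
    _ = ⁅ι₁ g, ι₂ h⁆ * ((ι₁ m)⁻¹ * ι₂ m) := by rw [← hconj]; group

theorem chiG1_sup_chiG2 : chiG1 G ⊔ chiG2 G = ⊤ := by
  let π : Monoid.Coprod G G →* Chi G := QuotientGroup.mk' (chiRel G)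
  change (π.comp Monoid.Coprod.inl).range ⊔ (π.comp Monoid.Coprod.inr).range = ⊤
  rw [MonoidHom.range_comp, MonoidHom.range_comp, ← Subgroup.map_sup,
    Monoid.Coprod.range_inl_sup_range_inr]
  exact map_top_of_surjective π (QuotientGroup.mk'_surjective _)

theorem normal_of_chiG1_le_normalizer {K : Subgroup (Chi G)} (h₁ : chiG1 G ≤ normalizer K)
    (h₂ : chiG2 G ≤ normalizer K) : K.Normal := by
  rw [← normalizer_eq_top_iff, eq_top_iff, ← chiG1_sup_chiG2]
  exact sup_le h₁ h₂

instance chiD_normal : (chiD G).Normal :=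
  normal_of_chiG1_le_normalizer (normalizer_commutator_ge_left _ _)
    (normalizer_commutator_ge_right _ _)

instance chiL_normal : (chiL G).Normal := by
  refine normal_of_chiG1_le_normalizer ?_ ?_ <;>
    rw [chiL, le_normalizer_closure_iff] <;> rintro _ ⟨y, rfl⟩ _ ⟨m, rfl⟩
  · have : ι₁ y * ((ι₁ m)⁻¹ * ι₂ m) * (ι₁ y)⁻¹
        = (ι₁ (m * y⁻¹))⁻¹ * ι₂ (m * y⁻¹) * ((ι₁ y⁻¹)⁻¹ * ι₂ y⁻¹)⁻¹ := by
      simp only [map_mul, map_inv]; group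
    rw [this]
    exact mul_mem (subset_closure ⟨_, rfl⟩) (inv_mem (subset_closure ⟨_, rfl⟩))
  · have : ι₂ y * ((ι₁ m)⁻¹ * ι₂ m) * (ι₂ y)⁻¹
        = ((ι₁ y⁻¹)⁻¹ * ι₂ y⁻¹)⁻¹ * ((ι₁ (m * y⁻¹))⁻¹ * ι₂ (m * y⁻¹)) := by
      simp only [map_mul, map_inv]; group
    rw [this]
    exact mul_mem (inv_mem (subset_closure ⟨_, rfl⟩)) (subset_closure ⟨_, rfl⟩)

instance chiL1_normal : (chiL1 G).Normal :=
  normal_of_chiG1_le_normalizer (normalizer_commutator_ge_right _ _)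
    (le_normalizer_commutator_of_commutator_le_centralizer chiD_le_centralizer_chiL)

instance chiL2_normal : (chiL2 G).Normal :=
  normal_of_chiG1_le_normalizer
    (le_normalizer_commutator_of_commutator_le_centralizer
      (commutator_comm (chiG2 G) (chiG1 G) ▸ chiD_le_centralizer_chiL))
    (normalizer_commutator_ge_right _ _)

theorem chiL1_sup_chiL2_le_chiL : chiL1 G ⊔ chiL2 G ≤ chiL G :=
  sup_le (commutator_le_left _ _) (commutator_le_left _ _)

theorem commutator_chi_le : commutator (Chi G) ≤ chiD G ⊔ (chiL1 G ⊔ chiL2 G) := by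
  set N := chiD G ⊔ (chiL1 G ⊔ chiL2 G)
  let π := QuotientGroup.mk' N
  have hπ {x y : Chi G} (h : ⁅x, y⁆ ∈ N) : Commute (π x) (π y) := by
    rw [← commutatorElement_eq_one_iff_commute, ← map_commutatorElement]
    exact (QuotientGroup.eq_one_iff _).mpr h
  have hD (g h : G) : Commute (π (ι₁ g)) (π (ι₂ h)) :=
    hπ (mem_sup_left (show _ ∈ chiD G from commutator_mem_commutator ⟨g, rfl⟩ ⟨h, rfl⟩))
  have hL₁ (g h : G) : Commute (π ((ι₁ h)⁻¹ * ι₂ h)) (π (ι₁ g)) :=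
    hπ (mem_sup_right (mem_sup_left (show _ ∈ chiL1 G from
      commutator_mem_commutator (subset_closure ⟨h, rfl⟩) ⟨g, rfl⟩)))
  have hL₂ (g h : G) : Commute (π ((ι₁ h)⁻¹ * ι₂ h)) (π (ι₂ g)) :=
    hπ (mem_sup_right (mem_sup_right (show _ ∈ chiL2 G from
      commutator_mem_commutator (subset_closure ⟨h, rfl⟩) ⟨g, rfl⟩)))
  have hι₂ (h : G) : π (ι₂ h) = π (ι₁ h) * π ((ι₁ h)⁻¹ * ι₂ h) := by
    rw [← map_mul, mul_inv_cancel_left]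
  have hι₁ (h : G) : π (ι₁ h) = π (ι₂ h) * (π ((ι₁ h)⁻¹ * ι₂ h))⁻¹ := by
    rw [hι₂, mul_inv_cancel_right]
  have hS : closure (Set.range (chiIota1 G) ∪ Set.range (chiIota2 G)) = ⊤ := by
    rw [Subgroup.closure_union, ← MonoidHom.coe_range, ← MonoidHom.coe_range, closure_eq,
      closure_eq]
    exact chiG1_sup_chiG2
  refine (commutator_le_ker_of_commute hS π ?_).trans (QuotientGroup.ker_mk' N).le
  rintro _ (⟨g, rfl⟩ | ⟨g, rfl⟩) _ (⟨h, rfl⟩ | ⟨h, rfl⟩)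
  · rw [hι₁ h]
    exact (hD g h).mul_right (hL₁ g h).symm.inv_right
  · exact hD g h
  · exact (hD h g).symm
  · rw [hι₂ h]
    exact (hD h g).symm.mul_right (hL₂ g h).symm

theorem commutator_chi_eq : commutator (Chi G) = chiD G ⊔ (chiL1 G ⊔ chiL2 G) :=
  le_antisymm commutator_chi_le <| sup_le (commutator_mono le_top le_top) <|
    sup_le (commutator_mono le_top le_top) (commutator_mono le_top le_top)

end Chi

theorem chi_derived_central_product (G : Type*) [Group G] :
    commutator (Chi G) = chiD G ⊔ (chiL1 G ⊔ chiL2 G) ∧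
    ⁅chiD G, chiL1 G ⊔ chiL2 G⁆ = ⊥ ∧
    ∀ x ∈ chiD G ⊓ (chiL1 G ⊔ chiL2 G), ∀ y ∈ commutator (Chi G), x * y = y * x := by
  refine ⟨commutator_chi_eq, ?_, fun x hx y hy => ?_⟩
  · exact le_bot_iff.mp <| (commutator_mono le_rfl chiL1_sup_chiL2_le_chiL).trans
      (commutator_eq_bot_iff_le_centralizer.mpr chiD_le_centralizer_chiL).le
  · have hx' : x ∈ centralizer (chiD G ⊔ chiL G : Subgroup (Chi G)) :=
      inf_le_centralizer_sup chiD_le_centralizer_chiL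
        (inf_le_inf_left _ chiL1_sup_chiL2_le_chiL hx)
    have hy' : y ∈ chiD G ⊔ chiL G :=
      sup_le_sup_left chiL1_sup_chiL2_le_chiL _ (commutator_chi_le hy)
    exact (mem_centralizer_iff.mp hx' y hy').symm
end

section
/- For every k ≥ 2, the (k+1)-st derived subgroup of the weak commutativity group χ(G) is the central product of the k-th derived subgroups of D, L₁ and L₂: χ(G)^(k+1) = D^(k) ⊔ L₁^(k) ⊔ L₂^(k), the commutator subgroups ⁅D^(k), L₁^(k)⁆, ⁅D^(k), L₂^(k)⁆, ⁅L₁^(k), L₂^(k)⁆ are all trivial, and the intersection of each factor with the join of the other two is contained in the centralizer of χ(G)^(k+1). -/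
open Subgroup

/-- The derived series of a subgroup, as subgroups of the ambient group. -/
def derivedSub {H : Type*} [Group H] (K : Subgroup H) : ℕ → Subgroup H
  | 0 => K
  | n + 1 => ⁅derivedSub K n, derivedSub K n⁆

/-!
The heart of the matter is that `D = ⁅G₁, G₂⁆` centralizes `L`. Writing `l u = u⁻¹ u^φ`, conjugation
by `g` and by `h^φ` act on these generators by `l u ↦ l (u g⁻¹) l g` and `l u ↦ l h l (u h⁻¹)`, and
`l p l q l p = l (p q p)`; with these rules the two conjugations are seen to commute on each `l x`,
which says exactly that `⁅g, h^φ⁆` commutes with `l x`.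

Modulo `D` the images of `G₁` and `G₂` commute and generate, so both are normal there and
`⁅L₁, L₂⁆ ≤ D`; the three subgroup lemma then gives `⁅L₁', L₂⁆ = 1`. As `χ(G)' = D L₁ L₂` and `D`
commutes with `L₁ L₂ ≤ L`, the second derived subgroup lies in `(D' ⁅L₁, L₂⁆) (L₁' L₂')`, a
product of commuting factors in which `⁅L₁, L₂⁆ ≤ D ∩ L` is abelian. The derived series of a
product of commuting subgroups is computed factorwise, which finishes the proof.
-/

namespace Subgroup

variable {M : Type*} [Group M]

theorem commutator_eq_bot_of_le {A B A' B' : Subgroup M} (h : ⁅A, B⁆ = ⊥) (hA : A' ≤ A)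
    (hB : B' ≤ B) : ⁅A', B'⁆ = ⊥ :=
  le_bot_iff.mp (h ▸ commutator_mono hA hB)

theorem commutator_sup_right_eq_bot {A B C : Subgroup M} (hB : ⁅A, B⁆ = ⊥) (hC : ⁅A, C⁆ = ⊥) :
    ⁅A, B ⊔ C⁆ = ⊥ := by
  rw [commutator_eq_bot_iff_le_centralizer, le_centralizer_iff] at hB hC ⊢
  exact sup_le hB hC

theorem mul_comm_of_mem_inf_sup {A B C : Subgroup M} (hB : ⁅A, B⁆ = ⊥) (hC : ⁅A, C⁆ = ⊥) {x y : M}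
    (hx : x ∈ A ⊓ (B ⊔ C)) (hy : y ∈ A ⊔ B ⊔ C) : x * y = y * x := by
  have hBC : ⁅A ⊓ (B ⊔ C), A⁆ = ⊥ := by
    rw [commutator_comm]
    exact commutator_eq_bot_of_le (commutator_sup_right_eq_bot hB hC) le_rfl inf_le_right
  have h : ⁅A ⊓ (B ⊔ C), A ⊔ B ⊔ C⁆ = ⊥ :=
    commutator_sup_right_eq_bot
      (commutator_sup_right_eq_bot hBC (commutator_eq_bot_of_le hB inf_le_left le_rfl))
      (commutator_eq_bot_of_le hC inf_le_left le_rfl)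
  exact (mem_centralizer_iff.mp (commutator_eq_bot_iff_le_centralizer.mp h hx) y hy).symm

theorem commutator_normal_of_sup_eq_top {H K : Subgroup M} (h : H ⊔ K = ⊤) : ⁅H, K⁆.Normal :=
  normalizer_eq_top_iff.mp <| top_le_iff.mp <|
    h ▸ sup_le (normalizer_commutator_ge_left H K) (normalizer_commutator_ge_right H K)

theorem normal_of_commutator_eq_bot_of_sup_eq_top {H K : Subgroup M} (hc : ⁅H, K⁆ = ⊥)
    (h : H ⊔ K = ⊤) : H.Normal :=
  normalizer_eq_top_iff.mp <| top_le_iff.mp <| h ▸ sup_le le_normalizer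
    ((le_centralizer_iff.mp (commutator_eq_bot_iff_le_centralizer.mp hc)).trans
      (centralizer_le_normalizer _))

theorem le_iff_map_mk'_eq_bot (N : Subgroup M) [N.Normal] (H : Subgroup M) :
    H ≤ N ↔ H.map (QuotientGroup.mk' N) = ⊥ := by
  rw [map_eq_bot_iff, QuotientGroup.ker_mk']

theorem map_noncommCoprod_prod {M' P : Type*} [Group M'] [Group P] (f : M →* P) (g : M' →* P)
    (comm : ∀ m n, Commute (f m) (g n)) (H : Subgroup M) (K : Subgroup M') :
    (H.prod K).map (f.noncommCoprod g comm) = H.map f ⊔ K.map g := by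
  apply le_antisymm
  · rintro - ⟨⟨a, b⟩, ⟨ha, hb⟩, rfl⟩
    exact mul_mem (mem_sup_left ⟨a, ha, rfl⟩) (mem_sup_right ⟨b, hb, rfl⟩)
  · refine sup_le ?_ ?_
    · rintro - ⟨a, ha, rfl⟩
      exact ⟨(a, 1), ⟨ha, one_mem K⟩, by simp⟩
    · rintro - ⟨b, hb, rfl⟩
      exact ⟨(1, b), ⟨one_mem H, hb⟩, by simp⟩

end Subgroup

section DerivedSub

variable {M M' : Type*} [Group M] [Group M']

theorem derivedSub_succ' (K : Subgroup M) (n : ℕ) : derivedSub K (n + 1) = derivedSub ⁅K, K⁆ n := by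
  induction n with
  | zero => rfl
  | succ n ih => rw [derivedSub, ih, derivedSub]

theorem derivedSeries_eq_derivedSub_top (n : ℕ) : derivedSeries M n = derivedSub ⊤ n := by
  induction n with
  | zero => rfl
  | succ n ih => rw [derivedSeries_succ, ih, derivedSub]

theorem derivedSub_mono {H K : Subgroup M} (h : H ≤ K) (n : ℕ) :
    derivedSub H n ≤ derivedSub K n := by
  induction n with
  | zero => exact h
  | succ n ih => exact Subgroup.commutator_mono ih ih

theorem derivedSub_le (K : Subgroup M) (n : ℕ) : derivedSub K n ≤ K := by
  induction n with
  | zero => exact le_rfl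
  | succ n ih => exact (Subgroup.commutator_le_self _).trans ih

theorem derivedSub_bot (n : ℕ) : derivedSub (⊥ : Subgroup M) n = ⊥ :=
  le_bot_iff.mp (derivedSub_le ⊥ n)

theorem derivedSub_map (f : M →* M') (H : Subgroup M) (n : ℕ) :
    derivedSub (H.map f) n = (derivedSub H n).map f := by
  induction n with
  | zero => rfl
  | succ n ih => rw [derivedSub, ih, ← Subgroup.map_commutator, derivedSub]

theorem derivedSub_prod (H : Subgroup M) (K : Subgroup M') (n : ℕ) :
    derivedSub (H.prod K) n = (derivedSub H n).prod (derivedSub K n) := by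
  induction n with
  | zero => rfl
  | succ n ih => rw [derivedSub, ih, Subgroup.commutator_prod_prod, derivedSub, derivedSub]

theorem derivedSub_sup_of_commutator_eq_bot {A B : Subgroup M} (h : ⁅A, B⁆ = ⊥) (n : ℕ) :
    derivedSub (A ⊔ B) n = derivedSub A n ⊔ derivedSub B n := by
  have comm (a : A) (b : B) : Commute (A.subtype a) (B.subtype b) :=
    (Subgroup.mem_centralizer_iff.mp (Subgroup.commutator_eq_bot_iff_le_centralizer.mp h a.2)
      b b.2).symm
  have hA : (⊤ : Subgroup A).map A.subtype = A := by rw [← MonoidHom.range_eq_map, A.range_subtype]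
  have hB : (⊤ : Subgroup B).map B.subtype = B := by rw [← MonoidHom.range_eq_map, B.range_subtype]
  calc derivedSub (A ⊔ B) n
      = derivedSub (((⊤ : Subgroup A).prod ⊤).map (A.subtype.noncommCoprod B.subtype comm)) n := by
        rw [Subgroup.map_noncommCoprod_prod, hA, hB]
    _ = (derivedSub ⊤ n).map A.subtype ⊔ (derivedSub ⊤ n).map B.subtype := by
        rw [derivedSub_map, derivedSub_prod, Subgroup.map_noncommCoprod_prod]
    _ = derivedSub A n ⊔ derivedSub B n := by rw [← derivedSub_map, ← derivedSub_map, hA, hB]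

end DerivedSub

namespace Subgroup

variable {M : Type*} [Group M]

theorem commutator_sup_self_of_commutator_eq_bot {A B : Subgroup M} (h : ⁅A, B⁆ = ⊥) :
    ⁅A ⊔ B, A ⊔ B⁆ = ⁅A, A⁆ ⊔ ⁅B, B⁆ :=
  derivedSub_sup_of_commutator_eq_bot h 1

theorem commutator_sup_self_le (A B : Subgroup M) [A.Normal] [B.Normal] :
    ⁅A ⊔ B, A ⊔ B⁆ ≤ ⁅A, A⁆ ⊔ ⁅B, B⁆ ⊔ ⁅A, B⁆ := by
  set J := ⁅A, A⁆ ⊔ ⁅B, B⁆ ⊔ ⁅A, B⁆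
  have hJ {X Y : Subgroup M} (h : ⁅X, Y⁆ ≤ J) :
      ⁅X.map (QuotientGroup.mk' J), Y.map (QuotientGroup.mk' J)⁆ = ⊥ := by
    rwa [← map_commutator, ← le_iff_map_mk'_eq_bot]
  rw [le_iff_map_mk'_eq_bot, map_commutator, map_sup,
    commutator_sup_self_of_commutator_eq_bot (hJ le_sup_right),
    hJ (le_sup_left.trans le_sup_left), hJ (le_sup_right.trans le_sup_left), sup_bot_eq]

theorem commutator_top_eq_bot_of_sup_eq_top {A B C : Subgroup M} (hAB : ⁅A, B⁆ = ⊥)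
    (hAC : ⁅A, C⁆ = ⊥) (hBC : ⁅B, C⁆ = ⊥) (h₁ : A ⊔ B = ⊤) (h₂ : A ⊔ C = ⊤) (h₃ : B ⊔ C = ⊤) :
    ⁅(⊤ : Subgroup M), (⊤ : Subgroup M)⁆ = ⊥ := by
  have hA : ⁅A, (⊤ : Subgroup M)⁆ = ⊥ := h₃ ▸ commutator_sup_right_eq_bot hAB hAC
  have hB : ⁅B, (⊤ : Subgroup M)⁆ = ⊥ :=
    h₂ ▸ commutator_sup_right_eq_bot (commutator_comm B A ▸ hAB) hBC
  calc ⁅(⊤ : Subgroup M), (⊤ : Subgroup M)⁆ = ⁅⊤, A ⊔ B⁆ := by rw [h₁]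
    _ = ⊥ := commutator_sup_right_eq_bot (by rwa [commutator_comm]) (by rwa [commutator_comm])

theorem commutator_top_le_of_sup_eq_top {N A B C : Subgroup M} [N.Normal] (hAB : ⁅A, B⁆ ≤ N)
    (hAC : ⁅A, C⁆ ≤ N) (hBC : ⁅B, C⁆ ≤ N) (h₁ : A ⊔ B = ⊤) (h₂ : A ⊔ C = ⊤) (h₃ : B ⊔ C = ⊤) :
    ⁅(⊤ : Subgroup M), (⊤ : Subgroup M)⁆ ≤ N := by
  have map_top : (⊤ : Subgroup M).map (QuotientGroup.mk' N) = ⊤ :=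
    map_top_of_surjective _ (QuotientGroup.mk'_surjective N)
  have map_sup_eq_top {X Y : Subgroup M} (h : X ⊔ Y = ⊤) :
      X.map (QuotientGroup.mk' N) ⊔ Y.map (QuotientGroup.mk' N) = ⊤ := by
    rw [← map_sup, h, map_top]
  simp only [le_iff_map_mk'_eq_bot N, map_commutator, map_top] at hAB hAC hBC ⊢
  exact commutator_top_eq_bot_of_sup_eq_top hAB hAC hBC (map_sup_eq_top h₁) (map_sup_eq_top h₂)
    (map_sup_eq_top h₃)

theorem commutator_commutator_eq_bot_of_sup_eq_top {A B : Subgroup M} (hAB : ⁅A, B⁆ = ⊥)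
    (h : A ⊔ B = ⊤) (C : Subgroup M) : ⁅⁅C, A⁆, ⁅C, B⁆⁆ = ⊥ :=
  have : A.Normal := normal_of_commutator_eq_bot_of_sup_eq_top hAB h
  have : B.Normal := normal_of_commutator_eq_bot_of_sup_eq_top (commutator_comm A B ▸ hAB)
    (sup_comm A B ▸ h)
  commutator_eq_bot_of_le hAB (commutator_le_right C A) (commutator_le_right C B)

theorem commutator_commutator_le_of_sup_eq_top {N A B : Subgroup M} [N.Normal] (hAB : ⁅A, B⁆ ≤ N)
    (h : A ⊔ B = ⊤) (C : Subgroup M) : ⁅⁅C, A⁆, ⁅C, B⁆⁆ ≤ N := by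
  simp only [le_iff_map_mk'_eq_bot N, map_commutator] at hAB ⊢
  refine commutator_commutator_eq_bot_of_sup_eq_top hAB ?_ _
  rw [← map_sup, h, map_top_of_surjective _ (QuotientGroup.mk'_surjective N)]

end Subgroup

open scoped commutatorElement

namespace Chi

variable {G : Type*} [Group G]

local notation "ι₁" => chiIota1 _
local notation "ι₂" => chiIota2 _

theorem commute_iota1_iota2 (g : G) : Commute (ι₁ g) (ι₂ g) := by
  have h : QuotientGroup.mk' (chiRel G) (Monoid.Coprod.inl g * Monoid.Coprod.inr g *
      (Monoid.Coprod.inl g)⁻¹ * (Monoid.Coprod.inr g)⁻¹) = 1 :=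
    (QuotientGroup.eq_one_iff _).mpr (Subgroup.subset_normalClosure ⟨g, rfl⟩)
  simp only [map_mul, map_inv] at h
  exact commutatorElement_eq_one_iff_commute.mp h

def lGen (g : G) : Chi G := (ι₁ g)⁻¹ * ι₂ g

theorem lGen_inv (g : G) : lGen g⁻¹ = (lGen g)⁻¹ := by
  rw [lGen, lGen, map_inv, map_inv, inv_inv, mul_inv_rev, inv_inv]
  exact (commute_iota1_iota2 g).inv_right.eq

theorem lGen_mul_lGen_mul_lGen (p q : G) : lGen p * lGen q * lGen p = lGen (p * q * p) := by
  have hq : Commute (ι₁ q)⁻¹ (ι₂ q) := (commute_iota1_iota2 q).inv_left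
  have hpq : Commute (ι₁ p * ι₁ q)⁻¹ (ι₂ p * ι₂ q) := by
    simpa only [map_mul] using (commute_iota1_iota2 (p * q)).inv_left
  calc lGen p * lGen q * lGen p
      = (ι₁ p)⁻¹ * (ι₂ p * ((ι₁ q)⁻¹ * ι₂ q)) * (ι₁ p)⁻¹ * ι₂ p := by simp only [lGen]; group
    _ = (ι₁ p)⁻¹ * ((ι₂ p * ι₂ q) * (ι₁ p * ι₁ q)⁻¹) * ι₂ p := by rw [hq.eq]; group
    _ = (ι₁ p)⁻¹ * ((ι₁ p * ι₁ q)⁻¹ * (ι₂ p * ι₂ q)) * ι₂ p := by rw [hpq.eq]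
    _ = lGen (p * q * p) := by simp only [lGen, map_mul]; group

theorem conj_iota1_lGen (v u : G) : MulAut.conj (ι₁ v) (lGen u) = lGen (u * v⁻¹) * lGen v := by
  have h : ι₂ v * (ι₁ v)⁻¹ = (ι₁ v)⁻¹ * ι₂ v := (commute_iota1_iota2 v).inv_left.eq.symm
  calc MulAut.conj (ι₁ v) (lGen u) = ι₁ v * (ι₁ u)⁻¹ * ι₂ u * (ι₂ v)⁻¹ * (ι₂ v * (ι₁ v)⁻¹) := by
        simp only [MulAut.conj_apply, lGen]; group
    _ = lGen (u * v⁻¹) * lGen v := by rw [h]; simp only [lGen, map_mul, map_inv]; group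

theorem conj_iota2_lGen (v u : G) : MulAut.conj (ι₂ v) (lGen u) = lGen v * lGen (u * v⁻¹) := by
  have h : ι₁ v * ι₂ v = ι₂ v * ι₁ v := (commute_iota1_iota2 v).eq
  calc MulAut.conj (ι₂ v) (lGen u) = (ι₁ v)⁻¹ * (ι₁ v * ι₂ v) * (ι₁ u)⁻¹ * ι₂ u * (ι₂ v)⁻¹ := by
        simp only [MulAut.conj_apply, lGen]; group
    _ = lGen v * lGen (u * v⁻¹) := by rw [h]; simp only [lGen, map_mul, map_inv]; group

theorem conj_iota1_conj_iota2_lGen (g h x : G) :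
    MulAut.conj (ι₁ g) (MulAut.conj (ι₂ h) (lGen x)) =
      MulAut.conj (ι₂ h) (MulAut.conj (ι₁ g) (lGen x)) := by
  simp only [conj_iota1_lGen, conj_iota2_lGen, map_mul]
  calc lGen (h * g⁻¹) * lGen g * (lGen (x * h⁻¹ * g⁻¹) * lGen g)
      = lGen (h * g⁻¹) * (lGen g * lGen (x * h⁻¹ * g⁻¹) * lGen g) := by simp only [mul_assoc]
    _ = lGen (h * g⁻¹) * lGen (g * x * h⁻¹) := by
        rw [lGen_mul_lGen_mul_lGen, show g * (x * h⁻¹ * g⁻¹) * g = g * x * h⁻¹ by group]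
    _ = lGen (h * g⁻¹) * lGen (g * x * h⁻¹) * lGen (h * g⁻¹) * lGen (g * h⁻¹) := by
        rw [show g * h⁻¹ = (h * g⁻¹)⁻¹ by group, lGen_inv]; group
    _ = lGen (h * x * g⁻¹) * lGen (g * h⁻¹) := by
        rw [lGen_mul_lGen_mul_lGen, show h * g⁻¹ * (g * x * h⁻¹) * (h * g⁻¹) = h * x * g⁻¹ by group]
    _ = lGen h * lGen (x * g⁻¹ * h⁻¹) * (lGen h * lGen (g * h⁻¹)) := by
        rw [← mul_assoc, lGen_mul_lGen_mul_lGen,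
          show h * (x * g⁻¹ * h⁻¹) * h = h * x * g⁻¹ by group]

theorem commute_commutator_iota_lGen (g h x : G) : Commute ⁅ι₁ g, ι₂ h⁆ (lGen x) := by
  have key : (ι₁ g)⁻¹ * ((ι₂ h)⁻¹ * lGen x * ι₂ h) * ι₁ g =
      (ι₂ h)⁻¹ * ((ι₁ g)⁻¹ * lGen x * ι₁ g) * ι₂ h := by
    simpa only [MulAut.conj_apply, map_inv (chiIota1 G), map_inv (chiIota2 G), inv_inv] using
      conj_iota1_conj_iota2_lGen g⁻¹ h⁻¹ x
  rw [Commute, SemiconjBy, commutatorElement_def]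
  calc ι₁ g * ι₂ h * (ι₁ g)⁻¹ * (ι₂ h)⁻¹ * lGen x
      = ι₁ g * ι₂ h * ((ι₁ g)⁻¹ * ((ι₂ h)⁻¹ * lGen x * ι₂ h) * ι₁ g) * (ι₁ g)⁻¹ * (ι₂ h)⁻¹ := by
        group
    _ = lGen x * (ι₁ g * ι₂ h * (ι₁ g)⁻¹ * (ι₂ h)⁻¹) := by rw [key]; group

theorem chiG1_sup_chiG2 : chiG1 G ⊔ chiG2 G = ⊤ := by
  have h₁ : chiG1 G = Monoid.Coprod.inl.range.map (QuotientGroup.mk' (chiRel G)) :=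
    MonoidHom.range_comp _ _
  have h₂ : chiG2 G = Monoid.Coprod.inr.range.map (QuotientGroup.mk' (chiRel G)) :=
    MonoidHom.range_comp _ _
  change (chiG1 G ⊔ chiG2 G : Subgroup (Monoid.Coprod G G ⧸ chiRel G)) = ⊤
  rw [h₁, h₂, ← Subgroup.map_sup, Monoid.Coprod.range_inl_sup_range_inr,
    map_top_of_surjective _ (QuotientGroup.mk'_surjective _)]

theorem lGen_mem_chiL (g : G) : lGen g ∈ chiL G := subset_closure ⟨g, rfl⟩

theorem chiL_sup_chiG1 : chiL G ⊔ chiG1 G = ⊤ := by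
  refine top_le_iff.mp (chiG1_sup_chiG2 (G := G) ▸ sup_le le_sup_right ?_)
  rintro - ⟨g, rfl⟩
  rw [show ι₂ g = ι₁ g * lGen g by rw [lGen]; group]
  exact mul_mem (mem_sup_right ⟨g, rfl⟩) (mem_sup_left (lGen_mem_chiL g))

theorem chiL_sup_chiG2 : chiL G ⊔ chiG2 G = ⊤ := by
  refine top_le_iff.mp (chiG1_sup_chiG2 (G := G) ▸ sup_le ?_ le_sup_right)
  rintro - ⟨g, rfl⟩
  rw [show ι₁ g = ι₂ g * (lGen g)⁻¹ by rw [lGen]; group]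
  exact mul_mem (mem_sup_right ⟨g, rfl⟩) (mem_sup_left (inv_mem (lGen_mem_chiL g)))

instance chiL_normal : (chiL G).Normal := by
  refine normalizer_eq_top_iff.mp (top_le_iff.mp (chiG1_sup_chiG2 (G := G) ▸ sup_le ?_ ?_)) <;>
    refine le_normalizer_closure_iff.mpr ?_ <;> rintro - ⟨v, rfl⟩ - ⟨u, rfl⟩
  · change MulAut.conj (ι₁ v) (lGen u) ∈ chiL G
    rw [conj_iota1_lGen]
    exact mul_mem (lGen_mem_chiL _) (lGen_mem_chiL _)
  · change MulAut.conj (ι₂ v) (lGen u) ∈ chiL G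
    rw [conj_iota2_lGen]
    exact mul_mem (lGen_mem_chiL _) (lGen_mem_chiL _)

instance chiD_normal : (chiD G).Normal := commutator_normal_of_sup_eq_top chiG1_sup_chiG2

instance chiL1_normal : (chiL1 G).Normal := commutator_normal_of_sup_eq_top chiL_sup_chiG1

instance chiL2_normal : (chiL2 G).Normal := commutator_normal_of_sup_eq_top chiL_sup_chiG2

theorem chiL1_le_chiL : chiL1 G ≤ chiL G := commutator_le_left _ _

theorem chiL2_le_chiL : chiL2 G ≤ chiL G := commutator_le_left _ _

theorem chiD_commutator_chiL : ⁅chiD G, chiL G⁆ = ⊥ := by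
  rw [commutator_eq_bot_iff_le_centralizer, chiL, centralizer_closure, chiD, commutator_le]
  rintro - ⟨g, rfl⟩ - ⟨h, rfl⟩
  rw [mem_centralizer_iff]
  rintro - ⟨x, rfl⟩
  exact (commute_commutator_iota_lGen g h x).symm.eq

theorem commutator_eq_bot_of_le_chiD_of_le_chiL {A B : Subgroup (Chi G)} (hA : A ≤ chiD G)
    (hB : B ≤ chiL G) : ⁅A, B⁆ = ⊥ :=
  commutator_eq_bot_of_le chiD_commutator_chiL hA hB

theorem chiL12_le_chiD : chiL12 G ≤ chiD G :=
  commutator_commutator_le_of_sup_eq_top (N := chiD G) le_rfl chiG1_sup_chiG2 (chiL G)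

theorem chiL12_le_chiL : chiL12 G ≤ chiL G :=
  (commutator_le_left _ _).trans chiL1_le_chiL

theorem commutator_commutator_chiL1_chiL2 : ⁅⁅chiL1 G, chiL1 G⁆, chiL2 G⁆ = ⊥ :=
  commutator_commutator_eq_bot_of_rotate
    (commutator_eq_bot_of_le_chiD_of_le_chiL chiL12_le_chiD chiL1_le_chiL)
    (commutator_comm (chiL2 G) (chiL1 G) ▸
      commutator_eq_bot_of_le_chiD_of_le_chiL chiL12_le_chiD chiL1_le_chiL)

theorem commutator_top_le_chiD_sup :
    ⁅(⊤ : Subgroup (Chi G)), (⊤ : Subgroup (Chi G))⁆ ≤ chiD G ⊔ chiL1 G ⊔ chiL2 G :=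
  commutator_top_le_of_sup_eq_top (A := chiG1 G) (B := chiG2 G) (C := chiL G)
    (le_sup_left.trans le_sup_left)
    ((commutator_comm _ _).trans_le (le_sup_right.trans le_sup_left))
    ((commutator_comm _ _).trans_le le_sup_right)
    chiG1_sup_chiG2 (sup_comm (chiL G) _ ▸ chiL_sup_chiG1) (sup_comm (chiL G) _ ▸ chiL_sup_chiG2)

theorem commutator_chiD_sup_le :
    ⁅chiD G ⊔ chiL1 G ⊔ chiL2 G, chiD G ⊔ chiL1 G ⊔ chiL2 G⁆ ≤
      (⁅chiD G, chiD G⁆ ⊔ chiL12 G) ⊔ (⁅chiL1 G, chiL1 G⁆ ⊔ ⁅chiL2 G, chiL2 G⁆) := by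
  rw [sup_assoc, commutator_sup_self_of_commutator_eq_bot
    (commutator_eq_bot_of_le_chiD_of_le_chiL le_rfl (sup_le chiL1_le_chiL chiL2_le_chiL))]
  exact sup_le (le_sup_left.trans le_sup_left) ((commutator_sup_self_le _ _).trans
    (sup_le le_sup_right (le_sup_right.trans le_sup_left)))

theorem derivedSeries_add_three_le (j : ℕ) :
    derivedSeries (Chi G) (j + 3) ≤
      derivedSub (chiD G) (j + 2) ⊔ derivedSub (chiL1 G) (j + 2) ⊔
        derivedSub (chiL2 G) (j + 2) := by
  have hL12 : ⁅chiL12 G, chiL12 G⁆ = ⊥ :=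
    commutator_eq_bot_of_le_chiD_of_le_chiL chiL12_le_chiD chiL12_le_chiL
  have hDL12 : ⁅⁅chiD G, chiD G⁆, chiL12 G⁆ = ⊥ :=
    commutator_eq_bot_of_le_chiD_of_le_chiL (commutator_le_self _) chiL12_le_chiL
  have hL1L2 : ⁅⁅chiL1 G, chiL1 G⁆, ⁅chiL2 G, chiL2 G⁆⁆ = ⊥ :=
    commutator_eq_bot_of_le commutator_commutator_chiL1_chiL2 le_rfl (commutator_le_self _)
  have hDL : ⁅⁅chiD G, chiD G⁆ ⊔ chiL12 G, ⁅chiL1 G, chiL1 G⁆ ⊔ ⁅chiL2 G, chiL2 G⁆⁆ = ⊥ :=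
    commutator_eq_bot_of_le_chiD_of_le_chiL (sup_le (commutator_le_self _) chiL12_le_chiD)
      (sup_le ((commutator_le_self _).trans chiL1_le_chiL)
        ((commutator_le_self _).trans chiL2_le_chiL))
  calc derivedSeries (Chi G) (j + 3)
      ≤ derivedSub (chiD G ⊔ chiL1 G ⊔ chiL2 G) (j + 2) := by
        rw [derivedSeries_eq_derivedSub_top, derivedSub_succ' ⊤]
        exact derivedSub_mono commutator_top_le_chiD_sup _
    _ ≤ derivedSub ((⁅chiD G, chiD G⁆ ⊔ chiL12 G) ⊔
          (⁅chiL1 G, chiL1 G⁆ ⊔ ⁅chiL2 G, chiL2 G⁆)) (j + 1) := by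
        rw [derivedSub_succ']
        exact derivedSub_mono commutator_chiD_sup_le _
    _ = derivedSub (chiD G) (j + 2) ⊔ derivedSub (chiL1 G) (j + 2) ⊔
          derivedSub (chiL2 G) (j + 2) := by
        rw [derivedSub_sup_of_commutator_eq_bot hDL, derivedSub_sup_of_commutator_eq_bot hDL12,
          derivedSub_sup_of_commutator_eq_bot hL1L2, derivedSub_succ' (chiL12 G), hL12,
          derivedSub_bot, sup_bot_eq, ← derivedSub_succ', ← derivedSub_succ', ← derivedSub_succ',
          sup_assoc]

theorem derivedSeries_succ_eq {k : ℕ} (hk : 2 ≤ k) :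
    derivedSeries (Chi G) (k + 1) =
      derivedSub (chiD G) k ⊔ derivedSub (chiL1 G) k ⊔ derivedSub (chiL2 G) k := by
  obtain ⟨j, rfl⟩ : ∃ j, k = j + 2 := ⟨k - 2, by omega⟩
  refine le_antisymm (derivedSeries_add_three_le j) ?_
  have h (A B : Subgroup (Chi G)) :
      derivedSub ⁅A, B⁆ (j + 2) ≤ derivedSeries (Chi G) (j + 3) := by
    rw [derivedSeries_eq_derivedSub_top, derivedSub_succ' ⊤]
    exact derivedSub_mono (commutator_mono le_top le_top) _
  exact sup_le (sup_le (h _ _) (h _ _)) (h _ _)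

theorem commutator_derivedSub_chiL1_chiL2 {k : ℕ} (hk : 1 ≤ k) :
    ⁅derivedSub (chiL1 G) k, derivedSub (chiL2 G) k⁆ = ⊥ := by
  obtain ⟨j, rfl⟩ : ∃ j, k = j + 1 := ⟨k - 1, by omega⟩
  rw [derivedSub_succ']
  exact commutator_eq_bot_of_le commutator_commutator_chiL1_chiL2 (derivedSub_le _ _)
    (derivedSub_le _ _)

end Chi

theorem chi_higher_derived_central_product (G : Type*) [Group G] (k : ℕ) (hk : 2 ≤ k) :
    derivedSeries (Chi G) (k + 1) =
      derivedSub (chiD G) k ⊔ derivedSub (chiL1 G) k ⊔ derivedSub (chiL2 G) k ∧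
    ⁅derivedSub (chiD G) k, derivedSub (chiL1 G) k⁆ = ⊥ ∧
    ⁅derivedSub (chiD G) k, derivedSub (chiL2 G) k⁆ = ⊥ ∧
    ⁅derivedSub (chiL1 G) k, derivedSub (chiL2 G) k⁆ = ⊥ ∧
    (∀ x ∈ derivedSub (chiD G) k ⊓ (derivedSub (chiL1 G) k ⊔ derivedSub (chiL2 G) k),
      ∀ y ∈ derivedSeries (Chi G) (k + 1), x * y = y * x) ∧
    (∀ x ∈ derivedSub (chiL1 G) k ⊓ (derivedSub (chiD G) k ⊔ derivedSub (chiL2 G) k),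
      ∀ y ∈ derivedSeries (Chi G) (k + 1), x * y = y * x) ∧
    (∀ x ∈ derivedSub (chiL2 G) k ⊓ (derivedSub (chiD G) k ⊔ derivedSub (chiL1 G) k),
      ∀ y ∈ derivedSeries (Chi G) (k + 1), x * y = y * x) := by
  have hEq := Chi.derivedSeries_succ_eq (G := G) hk
  have hDL1 : ⁅derivedSub (chiD G) k, derivedSub (chiL1 G) k⁆ = ⊥ :=
    Chi.commutator_eq_bot_of_le_chiD_of_le_chiL (derivedSub_le _ _)
      ((derivedSub_le _ _).trans Chi.chiL1_le_chiL)
  have hDL2 : ⁅derivedSub (chiD G) k, derivedSub (chiL2 G) k⁆ = ⊥ :=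
    Chi.commutator_eq_bot_of_le_chiD_of_le_chiL (derivedSub_le _ _)
      ((derivedSub_le _ _).trans Chi.chiL2_le_chiL)
  have hL1L2 := Chi.commutator_derivedSub_chiL1_chiL2 (G := G) (by omega : 1 ≤ k)
  refine ⟨hEq, hDL1, hDL2, hL1L2, fun x hx y hy => ?_, fun x hx y hy => ?_, fun x hx y hy => ?_⟩ <;>
    rw [hEq] at hy
  · exact mul_comm_of_mem_inf_sup hDL1 hDL2 hx hy
  · rw [commutator_comm] at hDL1
    rw [sup_comm (derivedSub (chiD G) k)] at hy
    exact mul_comm_of_mem_inf_sup hDL1 hL1L2 hx hy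
  · rw [commutator_comm] at hDL2 hL1L2
    rw [sup_comm _ (derivedSub (chiL2 G) k), ← sup_assoc] at hy
    exact mul_comm_of_mem_inf_sup hDL2 hL1L2 hx hy
end
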